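/- Let μ be a strictly positive Borel probability measure on ω^ω (i.e., μ assigns positive measure to every nonempty open set). Then there exists an F_σ set F ⊆ ω^ω with μ(F) = 1 such that for every Miller tree T ⊆ ω^{<ω}, the body [T] is not contained in F. -/

import Mathlib

open Set MeasureTheory Filter Topology ENNReal

/-- `T` is a tree on `ℕ`: a set of finite sequences closed under initial segments. -/
def IsTree (T : Set (List ℕ)) : Prop := ∀ σ ∈ T, ∀ n : ℕ, σ.take n ∈ T

/-- The body of a tree: all infinite sequences all of whose initial segments lie in `T`. -/
def body (T : Set (List ℕ)) : Set (ℕ → ℕ) :=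
  {x | ∀ n : ℕ, List.ofFn (fun i : Fin n => x i) ∈ T}

/-- `T` is a Miller tree: a nonempty tree in which every node has an extension
with infinitely many immediate successors. -/
def IsMillerTree (T : Set (List ℕ)) : Prop :=
  T.Nonempty ∧ IsTree T ∧
    ∀ σ ∈ T, ∃ τ ∈ T, σ <+: τ ∧ {a : ℕ | τ ++ [a] ∈ T}.Infinite

/-- For any strictly positive Borel probability measure `μ` on Baire space there is an `Fσ`
set of `μ`-measure one containing no body of a Miller tree. -/
theorem fsigma_full_measure_not_containing_miller_body
    (μ : Measure (ℕ → ℕ)) [IsProbabilityMeasure μ]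
    (hpos : ∀ U : Set (ℕ → ℕ), IsOpen U → U.Nonempty → 0 < μ U) :
    ∃ F : Set (ℕ → ℕ),
      (∃ C : ℕ → Set (ℕ → ℕ), (∀ n, IsClosed (C n)) ∧ F = ⋃ n, C n) ∧
      μ F = 1 ∧
      ∀ T : Set (List ℕ), IsMillerTree T → ¬ body T ⊆ F := by
  classical
  -- tails of each coordinate have small measure
  have hA : ∀ n : ℕ, Tendsto (fun k : ℕ => μ {x : ℕ → ℕ | k < x n}) atTop (𝓝 0) := by
    intro n
    have hmeas : ∀ k : ℕ, NullMeasurableSet {x : ℕ → ℕ | k < x n} μ := fun k =>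
      (measurable_pi_apply n (measurableSet_Ioi (a := k))).nullMeasurableSet
    have hanti : Antitone (fun k : ℕ => {x : ℕ → ℕ | k < x n}) := by
      intro a b hab y hy
      exact lt_of_le_of_lt hab hy
    have hint : (⋂ k : ℕ, {x : ℕ → ℕ | k < x n}) = ∅ := by
      ext y
      simp only [Set.mem_iInter, Set.mem_setOf_eq, Set.mem_empty_iff_false, iff_false, not_forall,
        not_lt]
      exact ⟨y n, le_rfl⟩
    have h := tendsto_measure_iInter_atTop hmeas hanti ⟨0, measure_ne_top μ _⟩
    rw [hint, measure_empty] at h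
    exact h
  have hchoice : ∀ m n : ℕ, ∃ k : ℕ,
      μ {x : ℕ → ℕ | k < x n} ≤ (2 : ℝ≥0∞)⁻¹ ^ (m + 1) * (2 : ℝ≥0∞)⁻¹ ^ (n + 1) := by
    intro m n
    have h2 : ((2 : ℝ≥0∞))⁻¹ ≠ 0 := by simp
    have hb : (0 : ℝ≥0∞) < (2 : ℝ≥0∞)⁻¹ ^ (m + 1) * (2 : ℝ≥0∞)⁻¹ ^ (n + 1) :=
      ENNReal.mul_pos (pow_ne_zero _ h2) (pow_ne_zero _ h2)
    exact ((hA n).eventually_le_const hb).exists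
  choose f hf using hchoice
  set C : ℕ → Set (ℕ → ℕ) := fun m => {x | ∀ n, x n ≤ f m n} with hC
  have hCclosed : ∀ m, IsClosed (C m) := by
    intro m
    have : C m = ⋂ n, (fun x : ℕ → ℕ => x n) ⁻¹' Set.Iic (f m n) := by
      ext y; simp [hC]
    rw [this]
    exact isClosed_iInter fun n => (isClosed_Iic).preimage (continuous_apply n)
  refine ⟨⋃ m, C m, ⟨C, hCclosed, rfl⟩, ?_, ?_⟩
  · -- measure one
    set S : ℝ≥0∞ := ∑' n : ℕ, (2 : ℝ≥0∞)⁻¹ ^ (n + 1) with hS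
    have hSne : S ≠ ⊤ := by
      have : S = (2 : ℝ≥0∞)⁻¹ * ∑' n : ℕ, (2 : ℝ≥0∞)⁻¹ ^ n := by
        rw [hS, ← ENNReal.tsum_mul_left]
        congr 1; funext n; rw [pow_succ, mul_comm]
      rw [this, ENNReal.tsum_geometric, ENNReal.one_sub_inv_two]
      exact ENNReal.mul_ne_top (by simp) (by simp)
    have hcompl : ∀ m, μ (C m)ᶜ ≤ (2 : ℝ≥0∞)⁻¹ ^ (m + 1) * S := by
      intro m
      have hsub : (C m)ᶜ ⊆ ⋃ n, {x : ℕ → ℕ | f m n < x n} := by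
        intro y hy
        simp only [hC, Set.mem_compl_iff, Set.mem_setOf_eq, not_forall, not_le] at hy
        obtain ⟨n, hn⟩ := hy
        exact Set.mem_iUnion.2 ⟨n, hn⟩
      calc μ (C m)ᶜ ≤ μ (⋃ n, {x : ℕ → ℕ | f m n < x n}) := measure_mono hsub
        _ ≤ ∑' n, μ {x : ℕ → ℕ | f m n < x n} := measure_iUnion_le _
        _ ≤ ∑' n, (2 : ℝ≥0∞)⁻¹ ^ (m + 1) * (2 : ℝ≥0∞)⁻¹ ^ (n + 1) :=
            ENNReal.tsum_le_tsum fun n => hf m n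
        _ = (2 : ℝ≥0∞)⁻¹ ^ (m + 1) * S := by rw [hS, ENNReal.tsum_mul_left]
    have hFmeas : MeasurableSet (⋃ m, C m) :=
      MeasurableSet.iUnion fun m => (hCclosed m).measurableSet
    rw [← prob_compl_eq_zero_iff hFmeas]
    have hle : ∀ m, μ (⋃ m, C m)ᶜ ≤ (2 : ℝ≥0∞)⁻¹ ^ (m + 1) * S := fun m =>
      le_trans (measure_mono (Set.compl_subset_compl.2 (Set.subset_iUnion C m))) (hcompl m)
    have htend : Tendsto (fun m : ℕ => (2 : ℝ≥0∞)⁻¹ ^ (m + 1) * S) atTop (𝓝 0) := by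
      have h1 : Tendsto (fun m : ℕ => (2 : ℝ≥0∞)⁻¹ ^ (m + 1)) atTop (𝓝 0) :=
        (ENNReal.tendsto_pow_atTop_nhds_zero_of_lt_one
          (by simpa using ENNReal.half_lt_self one_ne_zero one_ne_top)).comp
          (tendsto_add_atTop_nat 1)
      have := ENNReal.Tendsto.mul_const h1 (Or.inr hSne)
      simpa using this
    exact le_antisymm (ge_of_tendsto' htend hle) zero_le
  · -- no Miller body inside
    intro T hT hsub
    obtain ⟨⟨σ0, hσ0⟩, htree, hmill⟩ := hT
    have hnil : ([] : List ℕ) ∈ T := by simpa using htree σ0 hσ0 0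
    have Hstep : ∀ (m : ℕ) (σ : {l : List ℕ // l ∈ T}), ∃ τ : {l : List ℕ // l ∈ T},
        σ.1 <+: τ.1 ∧ σ.1.length < τ.1.length ∧
          ∃ k, k < τ.1.length ∧ f m k < τ.1.getD k 0 := by
      rintro m ⟨σ, hσ⟩
      obtain ⟨τ, hτT, hpre, hinf⟩ := hmill σ hσ
      have hex : ∃ a, τ ++ [a] ∈ T ∧ f m τ.length < a := by
        by_contra h
        push_neg at h
        exact hinf ((Set.finite_Iic (f m τ.length)).subset fun a ha => h a ha)
      obtain ⟨a, haT, ha⟩ := hex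
      refine ⟨⟨τ ++ [a], haT⟩, hpre.trans ⟨[a], rfl⟩,
        by simpa using Nat.lt_succ_of_le hpre.length_le, τ.length, by simp, ?_⟩
      simpa using ha
    choose g hgpre hglen k hk hval using Hstep
    set s : ℕ → {l : List ℕ // l ∈ T} :=
      fun m => Nat.rec ⟨[], hnil⟩ (fun m p => g m p) m with hs
    have hssucc : ∀ m, s (m + 1) = g m (s m) := fun m => rfl
    have hchain : ∀ a b, a ≤ b → (s a).1 <+: (s b).1 := by
      intro a b hab
      induction b, hab using Nat.le_induction with
      | base => exact List.prefix_refl _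
      | succ b hab ih => exact ih.trans (hssucc b ▸ hgpre b (s b))
    have hlen : ∀ m, m ≤ (s m).1.length := by
      intro m
      induction m with
      | zero => exact Nat.zero_le _
      | succ m ih => exact Nat.succ_le_of_lt (lt_of_le_of_lt ih (hglen m (s m)))
    set x : ℕ → ℕ := fun i => (s (i + 1)).1.getD i 0 with hx
    have hconsist : ∀ i M, i < (s M).1.length → (s M).1.getD i 0 = x i := by
      intro i M hi
      have hi' : i < (s (i + 1)).1.length := lt_of_lt_of_le (Nat.lt_succ_self i) (hlen (i + 1))
      rw [List.getD_eq_getElem _ _ hi, hx]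
      simp only []
      rw [List.getD_eq_getElem _ _ hi']
      rcases le_total (i + 1) M with h | h
      · exact ((hchain (i + 1) M h).getElem hi').symm
      · exact (hchain M (i + 1) h).getElem hi
    have hxbody : x ∈ body T := by
      intro n
      have hlen' : n ≤ (s n).1.length := hlen n
      have heq : List.ofFn (fun i : Fin n => x i) = (s n).1.take n := by
        apply List.ext_getElem
        · simp [Nat.min_eq_left hlen']
        · intro i h1 h2
          simp only [List.getElem_ofFn, List.getElem_take]
          have hi : i < (s n).1.length := lt_of_lt_of_le (by simpa using h1) hlen'
          rw [← hconsist i n hi, List.getD_eq_getElem _ _ hi]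
      rw [heq]
      exact htree _ (s n).2 n
    obtain ⟨m, hm⟩ := Set.mem_iUnion.1 (hsub hxbody)
    have hkm : k m (s m) < (s (m + 1)).1.length := hssucc m ▸ hk m (s m)
    have hvm : f m (k m (s m)) < x (k m (s m)) := by
      rw [← hconsist (k m (s m)) (m + 1) hkm]
      exact hssucc m ▸ hval m (s m)
    exact absurd (hm (k m (s m))) (not_le.2 hvm)
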